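/- Let W₁, …, Wₙ be i.i.d. exponential random variables with rate λ > 0, and let Sₙ = Σ_{k=1}^n min{W₁,…,W_k}. Then for every real s with s/λ < 1, the moment generating function satisfies E[e^{s Sₙ}] = ∏_{k=1}^n ( 1 + (s/λ) / ( k (1 - s/λ) ) ). -/

import Mathlib

open MeasureTheory Set Filter

/-- `minFirst W n ω = min {W 0 ω, …, W (n-1) ω}` for `n ≥ 1` (junk value `W 0 ω` for `n = 0`). -/
noncomputable def minFirst {Ω : Type*} (W : ℕ → Ω → ℝ) : ℕ → Ω → ℝ
  | 0, ω => W 0 ω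
  | n + 1, ω => min (minFirst W n ω) (W n ω)

/-!
Write `Mₖ = min {W₁, …, Wₖ}`, so that `Sₙ₊₁ = Sₙ + Mₙ₊₁` and `Mₙ₊₁ = min Mₙ Wₙ₊₁` with `Wₙ₊₁`
independent of `(Sₙ, Mₙ)`. Integrating out `Wₙ₊₁ ~ Exp(λ)` uses, for `a < λ` and `m ≥ 0`,
`E[exp (a min m W)] = λ/(λ-a) - a/(λ-a) exp ((a-λ) m)`,
which expresses `E[exp (s Sₙ₊₁ + b Mₙ₊₁)]` through `E[exp (s Sₙ)]` and
`E[exp (s Sₙ + (s + b - λ) Mₙ)]`. Hence the family of mixed moments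
`E[exp (s Sₙ + j (s-λ) Mₙ)] = n/(n+j) ∏_{k ≤ n} (1 + (s/λ)/(k (1-s/λ)))` (`n ≥ 1`, `j ∈ ℕ`)
is closed under the recursion, and `j = 0` is the theorem. Integrability is carried along the
induction: by Tonelli, a nonnegative `F(X, Y)` with `X ⟂ Y` is integrable as soon as its
partial integral in `Y` is.
-/

open ProbabilityTheory Real

namespace ProbabilityTheory.IndepFun

variable {Ω β γ : Type*} [MeasurableSpace Ω] [MeasurableSpace β] [MeasurableSpace γ]
  {P : Measure Ω} [IsFiniteMeasure P] {X : Ω → β} {Y : Ω → γ} {F : β × γ → ℝ}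

lemma integrable_comp_prodMk_of_nonneg (hXY : IndepFun X Y P) (hX : Measurable X)
    (hY : Measurable Y) (hF : Measurable F) (hF0 : ∀ p, 0 ≤ F p)
    (hFy : ∀ x, Integrable (fun y => F (x, y)) (P.map Y))
    (hint : Integrable (fun ω => ∫ y, F (X ω, y) ∂P.map Y) P) :
    Integrable (fun ω => F (X ω, Y ω)) P := by
  have hFXY : Integrable F ((P.map X).prod (P.map Y)) := by
    refine (integrable_prod_iff hF.aestronglyMeasurable).2 ⟨ae_of_all _ hFy, ?_⟩
    simp only [norm_of_nonneg (hF0 _)]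
    exact (integrable_map_measure
      (hF.stronglyMeasurable.integral_prod_right' (ν := P.map Y)).aestronglyMeasurable
      hX.aemeasurable).2 hint
  rw [← hXY.map_prod_eq_prod_map_map hX.aemeasurable hY.aemeasurable] at hFXY
  exact hFXY.comp_measurable (hX.prodMk hY)

lemma integral_comp_prodMk (hXY : IndepFun X Y P) (hX : Measurable X) (hY : Measurable Y)
    (hF : Measurable F) (hint : Integrable (fun ω => F (X ω, Y ω)) P) :
    ∫ ω, F (X ω, Y ω) ∂P = ∫ ω, ∫ y, F (X ω, y) ∂P.map Y ∂P := by
  have hmap := hXY.map_prod_eq_prod_map_map hX.aemeasurable hY.aemeasurable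
  have hFXY : Integrable F ((P.map X).prod (P.map Y)) := by
    rw [← hmap]
    exact (integrable_map_measure hF.aestronglyMeasurable (hX.prodMk hY).aemeasurable).2 hint
  rw [← integral_map (hX.prodMk hY).aemeasurable hF.aestronglyMeasurable, hmap,
    integral_prod F hFXY, integral_map hX.aemeasurable
      (hF.stronglyMeasurable.integral_prod_right' (ν := P.map Y)).aestronglyMeasurable]

end ProbabilityTheory.IndepFun

lemma integral_expMeasure {r : ℝ} (hr : 0 < r) (g : ℝ → ℝ) :
    ∫ x, g x ∂expMeasure r = ∫ x in Ioi 0, r * exp (-(r * x)) * g x := by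
  rw [expMeasure, gammaMeasure, integral_withDensity_eq_integral_toReal_smul (f := gammaPDF 1 r)
    (measurable_gammaPDFReal 1 r).ennreal_ofReal (ae_of_all _ fun _ => ENNReal.ofReal_lt_top),
    ← integral_Ici_eq_integral_Ioi, ← integral_indicator measurableSet_Ici]
  congr 1 with x
  change (exponentialPDF r x).toReal • g x = _
  by_cases hx : 0 ≤ x
  · simp [exponentialPDF_of_nonneg hx, hx, hr.le, (exp_pos _).le]
  · simp [exponentialPDF_of_neg (not_le.1 hx), hx]

lemma ae_nonneg_expMeasure {r : ℝ} : ∀ᵐ x ∂expMeasure r, 0 ≤ x := by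
  rw [ae_iff]
  simp only [not_le]
  change expMeasure r (Iio 0) = 0
  rw [expMeasure, gammaMeasure, withDensity_apply _ measurableSet_Iio]
  exact lintegral_exponentialPDF_of_nonpos le_rfl

lemma integral_exp_mul_expMeasure {r a : ℝ} (hr : 0 < r) (ha : a < r) :
    ∫ x, exp (a * x) ∂expMeasure r = r / (r - a) := by
  have h : ∀ x, r * exp (-(r * x)) * exp (a * x) = r * exp ((a - r) * x) := fun x => by
    rw [mul_assoc, ← exp_add]; ring_nf
  simp_rw [integral_expMeasure hr, h, integral_const_mul, integral_exp_mul_Ioi (sub_neg.2 ha)]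
  rw [mul_zero, exp_zero, ← neg_sub r a, neg_div_neg_eq, mul_one_div]

lemma integrable_exp_mul_expMeasure {r a : ℝ} (hr : 0 < r) (ha : a < r) :
    Integrable (fun x => exp (a * x)) (expMeasure r) :=
  .of_integral_ne_zero <| by
    rw [integral_exp_mul_expMeasure hr ha]; exact (div_pos hr (sub_pos.2 ha)).ne'

lemma integrable_exp_mul_min {ν : Measure ℝ} [IsFiniteMeasure ν] (hν : ∀ᵐ x ∂ν, 0 ≤ x)
    (a m : ℝ) : Integrable (fun x => exp (a * min m x)) ν := by
  refine Integrable.of_bound (by fun_prop) (exp (|a| * |m|)) ?_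
  filter_upwards [hν] with x hx
  have hmin : |min m x| ≤ |m| := by
    rcases le_total m x with h | h
    · rw [min_eq_left h]
    · rw [min_eq_right h, abs_of_nonneg hx]; exact h.trans (le_abs_self m)
  rw [norm_of_nonneg (exp_pos _).le, exp_le_exp]
  calc a * min m x ≤ |a * min m x| := le_abs_self _
    _ = |a| * |min m x| := abs_mul _ _
    _ ≤ |a| * |m| := mul_le_mul_of_nonneg_left hmin (abs_nonneg a)

lemma integral_exp_mul_min_expMeasure {r a m : ℝ} (hr : 0 < r) (ha : a < r) (hm : 0 ≤ m) :
    ∫ x, exp (a * min m x) ∂expMeasure r = r / (r - a) - a / (r - a) * exp ((a - r) * m) := by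
  set f := fun x => r * exp (-(r * x)) * exp (a * min m x)
  have hlow : EqOn f (fun x => r * exp ((a - r) * x)) (uIcc 0 m) := fun x hx => by
    rw [uIcc_of_le hm] at hx
    simp only [f, min_eq_right hx.2, mul_assoc, ← exp_add]; ring_nf
  have hhigh : EqOn f (fun x => r * exp (a * m) * exp (-r * x)) (Ioi m) := fun x hx => by
    simp only [f, min_eq_left (mem_Ioi.1 hx).le]; ring_nf
  have hf : Continuous f := by fun_prop
  rw [integral_expMeasure hr, ← intervalIntegral.integral_interval_add_Ioi'
      (hf.intervalIntegrable 0 m)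
      (IntegrableOn.congr_fun ((integrableOn_exp_mul_Ioi (neg_lt_zero.2 hr) m).const_mul _)
        hhigh.symm measurableSet_Ioi),
    intervalIntegral.integral_congr hlow, setIntegral_congr_fun measurableSet_Ioi hhigh,
    intervalIntegral.integral_const_mul, integral_const_mul,
    ← intervalIntegral.integral_Ioi_sub_Ioi (integrableOn_exp_mul_Ioi (sub_neg.2 ha) 0) hm,
    integral_exp_mul_Ioi (sub_neg.2 ha), integral_exp_mul_Ioi (sub_neg.2 ha),
    integral_exp_mul_Ioi (neg_lt_zero.2 hr)]
  have : r - a ≠ 0 := (sub_pos.2 ha).ne'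
  have : a - r ≠ 0 := (sub_neg.2 ha).ne
  rw [mul_zero, exp_zero,
    show exp ((a - r) * m) = exp (a * m) * exp (-r * m) by rw [← exp_add]; ring_nf]
  field_simp
  ring

lemma eq_expMeasure_of_measure_Ioi {r : ℝ} (hr : 0 < r) {μ : Measure ℝ} [IsProbabilityMeasure μ]
    (hμ : ∀ x, 0 ≤ x → μ (Ioi x) = ENNReal.ofReal (exp (-(r * x)))) : μ = expMeasure r := by
  have : IsProbabilityMeasure (expMeasure r) := isProbabilityMeasure_expMeasure hr
  have hIic : ∀ x, 0 ≤ x → μ (Iic x) = ENNReal.ofReal (1 - exp (-(r * x))) := fun x hx => by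
    rw [← compl_Ioi, prob_compl_eq_one_sub measurableSet_Ioi, hμ x hx,
      ENNReal.ofReal_sub _ (exp_pos _).le, ENNReal.ofReal_one]
  refine Measure.ext_of_Iic _ _ fun x => ?_
  rw [← ofReal_cdf (expMeasure r), cdf_expMeasure_eq hr]
  split_ifs with hx
  · exact hIic x hx
  · rw [ENNReal.ofReal_zero]
    exact measure_mono_null (Iic_subset_Iic.2 (not_le.1 hx).le) (by simp [hIic 0 le_rfl])

lemma integrable_and_integral_exp_mul_of_map_eq_expMeasure {Ω : Type*} [MeasurableSpace Ω]
    {P : Measure Ω} {r a : ℝ} (hr : 0 < r) (ha : a < r) {Y : Ω → ℝ} (hY : Measurable Y)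
    (hYlaw : P.map Y = expMeasure r) :
    Integrable (fun ω => exp (a * Y ω)) P ∧ ∫ ω, exp (a * Y ω) ∂P = r / (r - a) := by
  have hexp : AEStronglyMeasurable (fun x => exp (a * x)) (P.map Y) := by fun_prop
  refine ⟨(integrable_map_measure hexp hY.aemeasurable).1 ?_, ?_⟩
  · rw [hYlaw]; exact integrable_exp_mul_expMeasure hr ha
  · rw [← integral_map hY.aemeasurable hexp, hYlaw, integral_exp_mul_expMeasure hr ha]

lemma integrable_and_integral_exp_add_mul_min {Ω : Type*} [MeasurableSpace Ω] {P : Measure Ω}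
    [IsFiniteMeasure P] {r a : ℝ} (hr : 0 < r) (ha : a < r) {G M Y : Ω → ℝ}
    (hind : IndepFun (fun ω => (G ω, M ω)) Y P) (hG : Measurable G) (hM : Measurable M)
    (hY : Measurable Y) (hYlaw : P.map Y = expMeasure r) (hM0 : ∀ᵐ ω ∂P, 0 ≤ M ω)
    (h0 : Integrable (fun ω => exp (G ω)) P)
    (h1 : Integrable (fun ω => exp (G ω + (a - r) * M ω)) P) :
    Integrable (fun ω => exp (G ω + a * min (M ω) (Y ω))) P ∧
    ∫ ω, exp (G ω + a * min (M ω) (Y ω)) ∂P =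
      r / (r - a) * ∫ ω, exp (G ω) ∂P - a / (r - a) * ∫ ω, exp (G ω + (a - r) * M ω) ∂P := by
  have := isProbabilityMeasure_expMeasure hr
  set F : (ℝ × ℝ) × ℝ → ℝ := fun p => exp (p.1.1 + a * min p.1.2 p.2)
  have hF : Measurable F := by fun_prop
  have hinner : ∀ᵐ ω ∂P, ∫ y, F ((G ω, M ω), y) ∂P.map Y =
      r / (r - a) * exp (G ω) - a / (r - a) * exp (G ω + (a - r) * M ω) := by
    filter_upwards [hM0] with ω hω
    simp only [F, exp_add, integral_const_mul, hYlaw, integral_exp_mul_min_expMeasure hr ha hω]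
    ring
  have hint := hind.integrable_comp_prodMk_of_nonneg (hG.prodMk hM) hY hF
    (fun _ => (exp_pos _).le)
    (fun _ => by
      simp only [F, exp_add, hYlaw]
      exact (integrable_exp_mul_min ae_nonneg_expMeasure _ _).const_mul _)
    (((h0.const_mul _).sub (h1.const_mul _)).congr (hinner.mono fun _ h => h.symm))
  refine ⟨hint, ?_⟩
  rw [hind.integral_comp_prodMk (hG.prodMk hM) hY hF hint, integral_congr_ae hinner,
    integral_sub (h0.const_mul _) (h1.const_mul _), integral_const_mul, integral_const_mul]

section minFirst

variable {α : Type*}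

lemma minFirst_one (W : ℕ → α → ℝ) (ω : α) : minFirst W 1 ω = W 0 ω := min_self _

lemma minFirst_succ (W : ℕ → α → ℝ) (k : ℕ) (ω : α) :
    minFirst W (k + 1) ω = min (minFirst W k ω) (W k ω) := rfl

lemma mul_sum_minFirst_succ_add (W : ℕ → α → ℝ) (s b : ℝ) (n : ℕ) (ω : α) :
    s * ∑ k ∈ Finset.Icc 1 (n + 1), minFirst W k ω + b * minFirst W (n + 1) ω
      = s * ∑ k ∈ Finset.Icc 1 n, minFirst W k ω + (s + b) * min (minFirst W n ω) (W n ω) := by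
  rw [Finset.sum_Icc_succ_top (by omega), minFirst_succ]; ring

lemma minFirst_congr {β : Type*} {W : ℕ → α → ℝ} {V : ℕ → β → ℝ} {ω : α} {ω' : β} {n : ℕ}
    (h : ∀ i ≤ n, W i ω = V i ω') : ∀ k ≤ n + 1, minFirst W k ω = minFirst V k ω'
  | 0, _ => h 0 (Nat.zero_le n)
  | k + 1, hk => by
    rw [minFirst, minFirst, minFirst_congr h k (by omega), h k (by omega)]

variable [MeasurableSpace α]

lemma measurable_minFirst {W : ℕ → α → ℝ} (hW : ∀ i, Measurable (W i)) :
    ∀ k, Measurable (minFirst W k)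
  | 0 => hW 0
  | k + 1 => (measurable_minFirst hW k).min (hW k)

lemma ae_nonneg_minFirst {P : Measure α} {W : ℕ → α → ℝ} (hW : ∀ i, ∀ᵐ ω ∂P, 0 ≤ W i ω) :
    ∀ k, ∀ᵐ ω ∂P, 0 ≤ minFirst W k ω
  | 0 => hW 0
  | k + 1 => by
    filter_upwards [ae_nonneg_minFirst hW k, hW k] with ω h1 h2
    exact le_min h1 h2

end minFirst

section iid

variable {Ω : Type*} [MeasurableSpace Ω] {P : Measure Ω}

lemma ProbabilityTheory.iIndepFun.indepFun_stopped {β : Type*} [MeasurableSpace β]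
    {W : ℕ → Ω → β} (h : iIndepFun W P) (hW : ∀ i, Measurable (W i)) (n : ℕ) :
    IndepFun (fun ω i => W (min i n) ω) (W (n + 1)) P :=
  (h.indepFun_finset (Finset.range (n + 1)) {n + 1} (by simp) hW).comp
    (φ := fun v i => v ⟨min i n, Finset.mem_range.2 (by omega)⟩)
    (ψ := fun v => v ⟨n + 1, Finset.mem_singleton_self _⟩)
    (measurable_pi_lambda _ fun _ => measurable_pi_apply _) (measurable_pi_apply _)

lemma indepFun_sum_minFirst_minFirst {W : ℕ → Ω → ℝ} (h : iIndepFun W P)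
    (hW : ∀ i, Measurable (W i)) (n : ℕ) :
    IndepFun (fun ω => (∑ k ∈ Finset.Icc 1 (n + 1), minFirst W k ω, minFirst W (n + 1) ω))
      (W (n + 1)) P := by
  let coord : ℕ → (ℕ → ℝ) → ℝ := fun i u => u i
  have hcoord : ∀ i, Measurable (coord i) := measurable_pi_apply
  have hstopped : ∀ ω, ∀ k ≤ n + 1, minFirst coord k (fun i => W (min i n) ω) = minFirst W k ω :=
    fun ω => minFirst_congr fun i hi => by simp [coord, min_eq_left hi]
  convert (h.indepFun_stopped hW n).comp
    ((Finset.measurable_sum (Finset.Icc 1 (n + 1)) fun k _ => measurable_minFirst hcoord k).prodMk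
      (measurable_minFirst hcoord (n + 1))) measurable_id using 2 with ω
  · simp only [Function.comp_apply, hstopped ω (n + 1) le_rfl]
    congr 1
    exact Finset.sum_congr rfl fun k hk => (hstopped ω k (Finset.mem_Icc.1 hk).2).symm
  · rfl

end iid

theorem integrable_and_integral_exp_sum_minFirst_add_mul_minFirst {Ω : Type*} [MeasurableSpace Ω]
    {P : Measure Ω} [IsProbabilityMeasure P] {W : ℕ → Ω → ℝ} {r s : ℝ} (hr : 0 < r)
    (hs : s < r) (h : iIndepFun W P) (hW : ∀ i, Measurable (W i))
    (hlaw : ∀ i, P.map (W i) = expMeasure r) (n j : ℕ) :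
    Integrable (fun ω => exp (s * ∑ k ∈ Finset.Icc 1 (n + 1), minFirst W k ω
      + j * (s - r) * minFirst W (n + 1) ω)) P ∧
    ∫ ω, exp (s * ∑ k ∈ Finset.Icc 1 (n + 1), minFirst W k ω
      + j * (s - r) * minFirst W (n + 1) ω) ∂P
      = (n + 1) / (n + 1 + j) * ∏ k ∈ Finset.Icc 1 (n + 1), (1 + (s / r) / (k * (1 - s / r))) := by
  have hW0 : ∀ i, ∀ᵐ ω ∂P, 0 ≤ W i ω := fun i =>
    (ae_map_iff (hW i).aemeasurable measurableSet_Ici).1 (hlaw i ▸ ae_nonneg_expMeasure)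
  have hsr : 0 < r - s := sub_pos.2 hs
  have hts : 1 - s / r ≠ 0 := by rw [one_sub_div hr.ne']; exact (div_pos hsr hr).ne'
  induction n generalizing j with
  | zero =>
    set a := s + j * (s - r)
    have ha : a < r := by nlinarith [(Nat.cast_nonneg j : (0 : ℝ) ≤ j)]
    have hfun : ∀ ω, s * ∑ k ∈ Finset.Icc 1 (0 + 1), minFirst W k ω
        + j * (s - r) * minFirst W (0 + 1) ω = a * W 0 ω := fun ω => by
      simp only [zero_add, Finset.Icc_self, Finset.sum_singleton, minFirst_one]; ring
    simp_rw [hfun]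
    obtain ⟨hint, hval⟩ :=
      integrable_and_integral_exp_mul_of_map_eq_expMeasure hr ha (hW 0) (hlaw 0)
    refine ⟨hint, ?_⟩
    rw [hval, show r - a = (j + 1) * (r - s) by ring]
    simp only [Nat.cast_zero, zero_add, Finset.Icc_self, Finset.prod_singleton, Nat.cast_one]
    field_simp
    ring
  | succ n ih =>
    have ha : s + j * (s - r) < r := by nlinarith [(Nat.cast_nonneg j : (0 : ℝ) ≤ j)]
    have hc : s + j * (s - r) - r = ((j + 1 : ℕ) : ℝ) * (s - r) := by push_cast; ring
    have h0 := ih 0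
    simp only [Nat.cast_zero, zero_mul, add_zero,
      div_self (n.cast_add_one_ne_zero : (n : ℝ) + 1 ≠ 0), one_mul] at h0
    have hstep := integrable_and_integral_exp_add_mul_min hr ha
      ((indepFun_sum_minFirst_minFirst h hW n).comp (φ := fun p => (s * p.1, p.2))
        (by fun_prop) measurable_id)
      ((Finset.measurable_sum (Finset.Icc 1 (n + 1)) fun k _ =>
        measurable_minFirst hW k).const_mul s)
      (measurable_minFirst hW _) (hW _) (hlaw _)
      (ae_nonneg_minFirst hW0 _) h0.1 (hc ▸ (ih (j + 1)).1)
    simp only [Function.comp_apply, id_eq] at hstep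
    simp_rw [mul_sum_minFirst_succ_add W s _ (n + 1)]
    refine ⟨hstep.1, ?_⟩
    rw [hstep.2, hc, (ih (j + 1)).2, h0.2,
      Finset.prod_Icc_succ_top (show 1 ≤ n + 1 + 1 by omega)]
    generalize ∏ k ∈ Finset.Icc 1 (n + 1), (1 + s / r / (k * (1 - s / r))) = Q
    rw [show r - (s + j * (s - r)) = (j + 1) * (r - s) by ring]
    push_cast
    field_simp
    ring

theorem stmt_13 {Ω : Type*} [MeasurableSpace Ω] (P : Measure Ω) [IsProbabilityMeasure P]
    (lam : ℝ) (hlam : 0 < lam)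
    (W : ℕ → Ω → ℝ) (μ : Measure ℝ) [IsProbabilityMeasure μ]
    (hmeas : ∀ i, Measurable (W i))
    (hindep : ProbabilityTheory.iIndepFun W P)
    (hdist : ∀ i, Measure.map (W i) P = μ)
    (hexp : ∀ x : ℝ, 0 ≤ x → μ (Ioi x) = ENNReal.ofReal (Real.exp (-(lam * x))))
    (n : ℕ) (s : ℝ) (hs : s / lam < 1) :
    ∫ ω, Real.exp (s * ∑ k ∈ Finset.Icc 1 n, minFirst W k ω) ∂P =
      ∏ k ∈ Finset.Icc 1 n, (1 + (s / lam) / (k * (1 - s / lam))) := by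
  obtain rfl := eq_expMeasure_of_measure_Ioi hlam hexp
  cases n with
  | zero => simp
  | succ n =>
    have hs' : s < lam := (div_lt_one hlam).1 hs
    simpa [div_self (n.cast_add_one_ne_zero : (n : ℝ) + 1 ≠ 0)] using
      (integrable_and_integral_exp_sum_minFirst_add_mul_minFirst hlam hs' hindep hmeas hdist n 0).2
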